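/- arXiv:1105.6075 — 2 statements merged into one kernel-verified Lean document; each statement's English description precedes it below -/
import Mathlib

section
/- Let V be a finite index set with finite state spaces X_v of size at least 2 and p a strictly positive probability distribution on X_V. Let A, B, C be pairwise disjoint subsets of V with A nonempty, and suppose X_A ⊥ X_B | X_C [p]. Then for every D ⊆ C and every x_{A∪D} ∈ X_{A∪D}, λ_{A∪D}^{A∪B∪C}(x_{A∪D}) = λ_{A∪D}^{A∪C}(x_{A∪D}). -/
open Finset

open scoped Classical

variable {V : Type} [Fintype V] [DecidableEq V]

/-- Joint state space: variable `v` takes values in `{0, …, d v + 1}`,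
so each state space has size `d v + 2 ≥ 2`. -/
abbrev Config (V : Type) (d : V → ℕ) : Type := ∀ v : V, Fin (d v + 2)

/-- Marginal `p_M` of `p` on the margin `M`, as a function of a full configuration
(it depends only on the coordinates in `M`). -/
noncomputable def margin (d : V → ℕ) (p : Config V d → ℝ) (M : Finset V)
    (x : Config V d) : ℝ :=
  ∑ y : Config V d, if ∀ v ∈ M, y v = x v then p y else 0

/-- Marginal log-linear parameter `λ_L^M(x_L)`:
`|X_M|⁻¹ ∑_{y_M ∈ X_M} log p_M(y_M) ∏_{v ∈ L} (|X_v|·1[x_v = y_v] − 1)`.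
The sum over `y_M ∈ X_M` is realized by summing over full configurations `y`
that are `0` outside `M` (one representative for each `y_M`). -/
noncomputable def mll (d : V → ℕ) (p : Config V d → ℝ) (L M : Finset V)
    (x : Config V d) : ℝ :=
  (∏ v ∈ M, ((d v + 2 : ℕ) : ℝ))⁻¹ *
    ∑ y : Config V d,
      if ∀ v ∉ M, y v = 0 then
        Real.log (margin d p M y) *
          ∏ v ∈ L, (((d v + 2 : ℕ) : ℝ) * (if x v = y v then 1 else 0) - 1)
      else 0

/-- Conditional independence `X_A ⊥ X_B | X_C [p]`:
`p_{A∪B∪C}(x) · p_C(x) = p_{A∪C}(x) · p_{B∪C}(x)` for all configurations. -/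
def CondIndep (d : V → ℕ) (p : Config V d → ℝ) (A B C : Finset V) : Prop :=
  ∀ x : Config V d,
    margin d p (A ∪ B ∪ C) x * margin d p C x
      = margin d p (A ∪ C) x * margin d p (B ∪ C) x

variable {d : V → ℕ} {p : Config V d → ℝ}

lemma margin_pos (hpos : ∀ x, 0 < p x) (M : Finset V) (x : Config V d) :
    0 < margin d p M x := by
  unfold margin
  apply Finset.sum_pos'
  · intro i _
    split
    · exact (hpos i).le
    · exact le_rfl
  · exact ⟨x, Finset.mem_univ x, by simp [hpos x]⟩

lemma margin_congr (M : Finset V) {x y : Config V d} (h : ∀ v ∈ M, x v = y v) :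
    margin d p M x = margin d p M y := by
  unfold margin
  refine Finset.sum_congr rfl fun z _ => ?_
  refine if_congr ?_ rfl rfl
  constructor
  · intro hz v hv; rw [hz v hv, h v hv]
  · intro hz v hv; rw [hz v hv, h v hv]

lemma sum_split (b : V) (G : Config V d → ℝ) :
    ∑ y : Config V d, G y
      = ∑ t : Fin (d b + 2), ∑ z : Config V d,
          if z b = 0 then G (Function.update z b t) else 0 := by
  have h1 : ∀ t : Fin (d b + 2),
      (∑ z : Config V d, if z b = 0 then G (Function.update z b t) else 0)
        = ∑ z ∈ Finset.univ.filter (fun z : Config V d => z b = 0),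
            G (Function.update z b t) := by
    intro t; rw [Finset.sum_filter]
  simp_rw [h1]
  rw [← Finset.sum_fiberwise Finset.univ (fun y : Config V d => y b) G]
  refine Finset.sum_congr rfl fun t _ => ?_
  refine Finset.sum_bij' (fun y _ => Function.update y b 0)
    (fun z _ => Function.update z b t) ?_ ?_ ?_ ?_ ?_
  · intro y hy; simp
  · intro z hz; simp
  · intro y hy
    simp only [Finset.mem_filter, Finset.mem_univ, true_and] at hy
    show Function.update (Function.update y b 0) b t = y
    rw [Function.update_idem, ← hy, Function.update_eq_self]
  · intro z hz
    simp only [Finset.mem_filter, Finset.mem_univ, true_and] at hz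
    show Function.update (Function.update z b t) b 0 = z
    rw [Function.update_idem, ← hz, Function.update_eq_self]
  · intro y hy
    simp only [Finset.mem_filter, Finset.mem_univ, true_and] at hy
    rw [Function.update_idem, ← hy, Function.update_eq_self]

lemma peel (M : Finset V) (b : V) (hb : b ∈ M) (F : Config V d → ℝ)
    (hF : ∀ z t, F (Function.update z b t) = F z) :
    (∑ y : Config V d, if ∀ v ∉ M, y v = 0 then F y else 0)
      = ((d b + 2 : ℕ) : ℝ) *
        ∑ y : Config V d, if ∀ v ∉ M.erase b, y v = 0 then F y else 0 := by
  rw [sum_split b (fun y => if ∀ v ∉ M, y v = 0 then F y else 0)]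
  have key : ∀ (t : Fin (d b + 2)) (z : Config V d),
      (if z b = 0 then
          if ∀ v ∉ M, Function.update z b t v = 0 then F (Function.update z b t) else 0
        else 0)
      = if ∀ v ∉ M.erase b, z v = 0 then F z else 0 := by
    intro t z
    by_cases h0 : z b = 0
    · rw [if_pos h0, hF]
      refine if_congr ?_ rfl rfl
      constructor
      · intro h v hv
        rcases eq_or_ne v b with rfl | hne
        · exact h0
        · have hvM : v ∉ M := fun hm => hv (Finset.mem_erase.2 ⟨hne, hm⟩)
          have := h v hvM
          rwa [Function.update_of_ne hne] at this
      · intro h v hv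
        have hne : v ≠ b := fun he => hv (he ▸ hb)
        rw [Function.update_of_ne hne]
        exact h v (fun hm => hv (Finset.mem_of_mem_erase hm))
    · rw [if_neg h0, eq_comm, if_neg]
      intro h
      exact h0 (h b (Finset.notMem_erase b M))
  simp_rw [key]
  rw [Finset.sum_const, Finset.card_univ, Fintype.card_fin, nsmul_eq_mul]

lemma kill (M : Finset V) (a : V) (ha : a ∈ M) (F : Config V d → ℝ)
    (hF : ∀ z t, F (Function.update z a t) = F z)
    (g : Fin (d a + 2) → ℝ) (hg : ∑ t, g t = 0) :
    (∑ y : Config V d, if ∀ v ∉ M, y v = 0 then F y * g (y a) else 0) = 0 := by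
  rw [sum_split a (fun y => if ∀ v ∉ M, y v = 0 then F y * g (y a) else 0)]
  have key : ∀ (t : Fin (d a + 2)) (z : Config V d),
      (if z a = 0 then
          if ∀ v ∉ M, Function.update z a t v = 0 then
            F (Function.update z a t) * g (Function.update z a t a) else 0
        else 0)
      = g t * (if z a = 0 then (if ∀ v ∉ M, z v = 0 then F z else 0) else 0) := by
    intro t z
    by_cases h0 : z a = 0
    · rw [if_pos h0, if_pos h0]
      have hcond : (∀ v ∉ M, Function.update z a t v = 0) ↔ (∀ v ∉ M, z v = 0) := by
        constructor
        · intro h v hv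
          have hne : v ≠ a := fun he => hv (he ▸ ha)
          have := h v hv
          rwa [Function.update_of_ne hne] at this
        · intro h v hv
          have hne : v ≠ a := fun he => hv (he ▸ ha)
          rw [Function.update_of_ne hne]
          exact h v hv
      rw [hF, Function.update_self]
      by_cases hc : ∀ v ∉ M, z v = 0
      · rw [if_pos (hcond.2 hc), if_pos hc]; ring
      · rw [if_neg (fun h => hc (hcond.1 h)), if_neg hc, mul_zero]
    · rw [if_neg h0, if_neg h0, mul_zero]
  simp_rw [key, ← Finset.mul_sum]
  rw [← Finset.sum_mul, hg, zero_mul]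

lemma peelSet (M : Finset V) (S : Finset V) (hS : S ⊆ M) (F : Config V d → ℝ)
    (hF : ∀ b ∈ S, ∀ (z : Config V d) (t : Fin (d b + 2)),
      F (Function.update z b t) = F z) :
    (∑ y : Config V d, if ∀ v ∉ M, y v = 0 then F y else 0)
      = (∏ v ∈ S, ((d v + 2 : ℕ) : ℝ)) *
        ∑ y : Config V d, if ∀ v ∉ M \ S, y v = 0 then F y else 0 := by
  classical
  revert hS hF
  induction S using Finset.induction_on with
  | empty => intro _ _; simp
  | @insert b S hbS ih =>
    intro hS hF
    have hSM : S ⊆ M := fun v hv => hS (Finset.mem_insert_of_mem hv)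
    rw [ih hSM (fun b hb => hF b (Finset.mem_insert_of_mem hb))]
    have hbMS : b ∈ M \ S :=
      Finset.mem_sdiff.2 ⟨hS (Finset.mem_insert_self b S), hbS⟩
    rw [peel (M \ S) b hbMS F (hF b (Finset.mem_insert_self b S))]
    rw [Finset.prod_insert hbS]
    have : M \ insert b S = (M \ S).erase b := by
      ext v
      simp [Finset.mem_sdiff, Finset.mem_erase, and_comm, or_comm, and_assoc]
      tauto
    rw [this]
    ring

lemma csum (a : V) (x : Config V d) :
    ∑ t : Fin (d a + 2), (((d a + 2 : ℕ) : ℝ) * (if x a = t then 1 else 0) - 1) = 0 := by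
  rw [Finset.sum_sub_distrib, ← Finset.mul_sum, Finset.sum_ite_eq]
  simp

lemma log_margin_CI (hpos : ∀ x, 0 < p x) (A B C : Finset V)
    (hCI : ∀ x : Config V d,
      margin d p (A ∪ B ∪ C) x * margin d p C x
        = margin d p (A ∪ C) x * margin d p (B ∪ C) x)
    (y : Config V d) :
    Real.log (margin d p (A ∪ B ∪ C) y)
      = Real.log (margin d p (A ∪ C) y) + Real.log (margin d p (B ∪ C) y)
        - Real.log (margin d p C y) := by
  have h := congrArg Real.log (hCI y)
  rw [Real.log_mul (margin_pos hpos _ y).ne' (margin_pos hpos _ y).ne',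
    Real.log_mul (margin_pos hpos _ y).ne' (margin_pos hpos _ y).ne'] at h
  linarith

theorem mll_margin_change' (d : V → ℕ) (p : Config V d → ℝ)
    (hpos : ∀ x, 0 < p x) (hsum : ∑ x, p x = 1)
    (A B C : Finset V)
    (hAB : Disjoint A B) (hAC : Disjoint A C) (hBC : Disjoint B C)
    (hA : A.Nonempty)
    (hCI : ∀ x : Config V d,
      margin d p (A ∪ B ∪ C) x * margin d p C x
        = margin d p (A ∪ C) x * margin d p (B ∪ C) x) :
    ∀ D, D ⊆ C → ∀ x : Config V d,
      (∏ v ∈ A ∪ B ∪ C, ((d v + 2 : ℕ) : ℝ))⁻¹ *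
        (∑ y : Config V d, if ∀ v ∉ A ∪ B ∪ C, y v = 0 then
          Real.log (margin d p (A ∪ B ∪ C) y) *
            ∏ v ∈ A ∪ D, (((d v + 2 : ℕ) : ℝ) * (if x v = y v then 1 else 0) - 1)
          else 0)
      = (∏ v ∈ A ∪ C, ((d v + 2 : ℕ) : ℝ))⁻¹ *
        (∑ y : Config V d, if ∀ v ∉ A ∪ C, y v = 0 then
          Real.log (margin d p (A ∪ C) y) *
            ∏ v ∈ A ∪ D, (((d v + 2 : ℕ) : ℝ) * (if x v = y v then 1 else 0) - 1)
          else 0) := by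
  intro D hD x
  obtain ⟨a, haA⟩ := hA
  set L := A ∪ D with hLdef
  have haL : a ∈ L := Finset.mem_union_left _ haA
  have haM : a ∈ A ∪ B ∪ C := Finset.mem_union_left _ (Finset.mem_union_left _ haA)
  have haB : a ∉ B := Finset.disjoint_left.1 hAB haA
  have haC : a ∉ C := Finset.disjoint_left.1 hAC haA
  have haBC : a ∉ B ∪ C := fun h => (Finset.mem_union.1 h).elim haB haC
  set c : (v : V) → Fin (d v + 2) → ℝ :=
    fun v t => ((d v + 2 : ℕ) : ℝ) * (if x v = t then 1 else 0) - 1 with hc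
  set g : Fin (d a + 2) → ℝ := c a with hg
  -- independence facts
  have hupd : ∀ (b : V), b ∉ L → ∀ (z : Config V d) (t : Fin (d b + 2)),
      (∏ v ∈ L, c v (Function.update z b t v)) = ∏ v ∈ L, c v (z v) := by
    intro b hb z t
    refine Finset.prod_congr rfl fun v hv => ?_
    rw [Function.update_of_ne (by rintro rfl; exact hb hv)]
  have hupdE : ∀ (z : Config V d) (t : Fin (d a + 2)),
      (∏ v ∈ L.erase a, c v (Function.update z a t v)) = ∏ v ∈ L.erase a, c v (z v) := by
    intro z t
    refine Finset.prod_congr rfl fun v hv => ?_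
    rw [Function.update_of_ne (Finset.mem_erase.1 hv).1]
  have hmupd : ∀ (N : Finset V) (b : V), b ∉ N → ∀ (z : Config V d) (t : Fin (d b + 2)),
      margin d p N (Function.update z b t) = margin d p N z := by
    intro N b hb z t
    refine margin_congr N fun v hv => ?_
    rw [Function.update_of_ne (by rintro rfl; exact hb hv)]
  -- split the big sum
  have hsplit :
      (∑ y : Config V d, if ∀ v ∉ A ∪ B ∪ C, y v = 0 then
          Real.log (margin d p (A ∪ B ∪ C) y) * ∏ v ∈ L, c v (y v) else 0)
      = (∑ y : Config V d, if ∀ v ∉ A ∪ B ∪ C, y v = 0 then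
          Real.log (margin d p (A ∪ C) y) * ∏ v ∈ L, c v (y v) else 0)
        + (∑ y : Config V d, if ∀ v ∉ A ∪ B ∪ C, y v = 0 then
            (Real.log (margin d p (B ∪ C) y) * ∏ v ∈ L.erase a, c v (y v)) * g (y a) else 0)
        - (∑ y : Config V d, if ∀ v ∉ A ∪ B ∪ C, y v = 0 then
            (Real.log (margin d p C y) * ∏ v ∈ L.erase a, c v (y v)) * g (y a) else 0) := by
    rw [← Finset.sum_add_distrib, ← Finset.sum_sub_distrib]
    refine Finset.sum_congr rfl fun y _ => ?_
    by_cases h : ∀ v ∉ A ∪ B ∪ C, y v = 0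
    · rw [if_pos h, if_pos h, if_pos h, if_pos h]
      rw [log_margin_CI hpos A B C hCI y,
        ← Finset.mul_prod_erase L (fun v => c v (y v)) haL]
      show _ = _ + (Real.log (margin d p (B ∪ C) y) * ∏ v ∈ L.erase a, c v (y v)) * c a (y a)
        - (Real.log (margin d p C y) * ∏ v ∈ L.erase a, c v (y v)) * c a (y a)
      ring
    · rw [if_neg h, if_neg h, if_neg h, if_neg h]; ring
  have hgsum : ∑ t, g t = 0 := csum a x
  have h2 : (∑ y : Config V d, if ∀ v ∉ A ∪ B ∪ C, y v = 0 then
      (Real.log (margin d p (B ∪ C) y) * ∏ v ∈ L.erase a, c v (y v)) * g (y a) else 0) = 0 := by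
    refine kill (A ∪ B ∪ C) a haM
      (fun y => Real.log (margin d p (B ∪ C) y) * ∏ v ∈ L.erase a, c v (y v)) ?_ g hgsum
    intro z t
    show Real.log (margin d p (B ∪ C) (Function.update z a t)) *
        ∏ v ∈ L.erase a, c v (Function.update z a t v)
      = Real.log (margin d p (B ∪ C) z) * ∏ v ∈ L.erase a, c v (z v)
    rw [hmupd (B ∪ C) a haBC z t, hupdE z t]
  have h3 : (∑ y : Config V d, if ∀ v ∉ A ∪ B ∪ C, y v = 0 then
      (Real.log (margin d p C y) * ∏ v ∈ L.erase a, c v (y v)) * g (y a) else 0) = 0 := by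
    refine kill (A ∪ B ∪ C) a haM
      (fun y => Real.log (margin d p C y) * ∏ v ∈ L.erase a, c v (y v)) ?_ g hgsum
    intro z t
    show Real.log (margin d p C (Function.update z a t)) *
        ∏ v ∈ L.erase a, c v (Function.update z a t v)
      = Real.log (margin d p C z) * ∏ v ∈ L.erase a, c v (z v)
    rw [hmupd C a haC z t, hupdE z t]
  have hMB : (A ∪ B ∪ C) \ B = A ∪ C := by
    ext v
    simp only [Finset.mem_sdiff, Finset.mem_union]
    constructor
    · rintro ⟨(h | h) | h, hb⟩
      · exact Or.inl h
      · exact absurd h hb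
      · exact Or.inr h
    · rintro (h | h)
      · exact ⟨Or.inl (Or.inl h), Finset.disjoint_left.1 hAB h⟩
      · exact ⟨Or.inr h, Finset.disjoint_right.1 hBC h⟩
  have h1 : (∑ y : Config V d, if ∀ v ∉ A ∪ B ∪ C, y v = 0 then
      Real.log (margin d p (A ∪ C) y) * ∏ v ∈ L, c v (y v) else 0)
      = (∏ v ∈ B, ((d v + 2 : ℕ) : ℝ)) *
        (∑ y : Config V d, if ∀ v ∉ A ∪ C, y v = 0 then
          Real.log (margin d p (A ∪ C) y) * ∏ v ∈ L, c v (y v) else 0) := by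
    have := peelSet (A ∪ B ∪ C) B
      (fun v hv => Finset.mem_union_left _ (Finset.mem_union_right _ hv))
      (fun y => Real.log (margin d p (A ∪ C) y) * ∏ v ∈ L, c v (y v)) ?_
    · rw [hMB] at this; exact this
    · intro b hb z t
      have hbAC : b ∉ A ∪ C := fun h => (Finset.mem_union.1 h).elim
        (fun h => Finset.disjoint_right.1 hAB hb h)
        (fun h => Finset.disjoint_left.1 hBC hb h)
      have hbL : b ∉ L := fun h => (Finset.mem_union.1 h).elim
        (fun h => Finset.disjoint_right.1 hAB hb h)
        (fun h => Finset.disjoint_left.1 hBC hb (hD h))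
      show Real.log (margin d p (A ∪ C) (Function.update z b t)) *
          ∏ v ∈ L, c v (Function.update z b t v)
        = Real.log (margin d p (A ∪ C) z) * ∏ v ∈ L, c v (z v)
      rw [hmupd (A ∪ C) b hbAC z t, hupd b hbL z t]
  rw [hsplit, h2, h3, h1, add_zero, sub_zero]
  have hunion : A ∪ B ∪ C = (A ∪ C) ∪ B := Finset.union_right_comm A B C
  have hdisj : Disjoint (A ∪ C) B := Finset.disjoint_union_left.2 ⟨hAB, hBC.symm⟩
  rw [hunion, Finset.prod_union hdisj, mul_inv]
  have hBpos : (0:ℝ) < ∏ v ∈ B, ((d v + 2 : ℕ) : ℝ) :=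
    Finset.prod_pos fun v _ => by positivity
  rw [mul_assoc, ← mul_assoc ((∏ v ∈ B, ((d v + 2 : ℕ) : ℝ))⁻¹),
    inv_mul_cancel₀ hBpos.ne', one_mul]


/-- if `X_A ⊥ X_B | X_C [p]` with `A` nonempty, then for every `D ⊆ C`
the MLL parameter of `A ∪ D` is the same in the margins `A ∪ B ∪ C` and `A ∪ C`. -/
theorem mll_margin_change (d : V → ℕ) (p : Config V d → ℝ)
    (hpos : ∀ x, 0 < p x) (hsum : ∑ x, p x = 1)
    (A B C : Finset V)
    (hAB : Disjoint A B) (hAC : Disjoint A C) (hBC : Disjoint B C)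
    (hA : A.Nonempty) (hCI : CondIndep d p A B C) :
    ∀ D, D ⊆ C → ∀ x : Config V d,
      mll d p (A ∪ D) (A ∪ B ∪ C) x = mll d p (A ∪ D) (A ∪ C) x := by
  intro D hD x
  have h := mll_margin_change' d p hpos hsum A B C hAB hAC hBC hA
    (fun y => hCI y) D hD x
  unfold mll
  exact h
end

section
/- Let G be an acyclic directed mixed graph on a finite vertex set V and let H be a head of G with tail T = tail_G(H). Then H = barren_G(H ∪ T); that is, H is exactly the set of vertices of H ∪ T having no non-trivial descendant in H ∪ T. -/
open Finset

open scoped Classical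

variable {V : Type} [Fintype V] [DecidableEq V]

/-- An acyclic directed mixed graph (ADMG): directed edges `dir` and a symmetric
irreflexive set of bidirected edges `bi`, with no directed cycle. -/
structure ADMG (V : Type) [Fintype V] [DecidableEq V] where
  dir : V → V → Prop
  bi : V → V → Prop
  bi_symm : ∀ {v w}, bi v w → bi w v
  bi_irrefl : ∀ v, ¬ bi v v
  acyclic : ∀ v, ¬ Relation.TransGen dir v v

namespace ADMG

/-- Ancestors of (members of) `A`: vertices `w` with `w = a` or a directed path `w → ⋯ → a`
for some `a ∈ A`. -/
noncomputable def anc (G : ADMG V) (A : Finset V) : Finset V :=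
  univ.filter fun w => ∃ a ∈ A, Relation.ReflTransGen G.dir w a

/-- Descendants of (members of) `A`. -/
noncomputable def dec (G : ADMG V) (A : Finset V) : Finset V :=
  univ.filter fun w => ∃ a ∈ A, Relation.ReflTransGen G.dir a w

/-- Parents of (members of) `A`. -/
noncomputable def pa (G : ADMG V) (A : Finset V) : Finset V :=
  univ.filter fun w => ∃ a ∈ A, G.dir w a

/-- `barren_G(U)`: members of `U` with no non-trivial descendant in `U`. -/
noncomputable def barren (G : ADMG V) (U : Finset V) : Finset V :=
  U.filter fun v => G.dec {v} ∩ U = {v}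

/-- `U` is barren if `barren_G(U) = U`. -/
def IsBarren (G : ADMG V) (U : Finset V) : Prop := G.barren U = U

/-- One bidirected step inside the induced subgraph `G_S`. -/
def biStep (G : ADMG V) (S : Finset V) (u w : V) : Prop :=
  u ∈ S ∧ w ∈ S ∧ G.bi u w

/-- District of (members of) `A` in the induced subgraph `G_S`: vertices joined to a member
of `A` by a (possibly empty) bidirected path within `S`. -/
noncomputable def disIn (G : ADMG V) (S A : Finset V) : Finset V :=
  univ.filter fun w => ∃ a ∈ A, a ∈ S ∧ w ∈ S ∧ Relation.ReflTransGen (G.biStep S) a w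

/-- District in the whole graph. -/
noncomputable def dis (G : ADMG V) (A : Finset V) : Finset V := G.disIn univ A

/-- A head: a nonempty barren set connected by bidirected paths in `G_{an_G(H)}`. -/
def IsHead (G : ADMG V) (H : Finset V) : Prop :=
  H.Nonempty ∧ G.IsBarren H ∧
    ∀ a ∈ H, ∀ b ∈ H, Relation.ReflTransGen (G.biStep (G.anc H)) a b

/-- The tail of a head: `tail_G(H) = pa_G(D) ∪ (D ∖ H)` where `D = dis_{G_{an(H)}}(H)`. -/
noncomputable def tail (G : ADMG V) (H : Finset V) : Finset V :=
  G.pa (G.disIn (G.anc H) H) ∪ (G.disIn (G.anc H) H \ H)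

end ADMG

/-- `Gbar` is a head-preserving completion of `G`: a complete supergraph (on the same
vertices) in which every head of `G` is still a head. -/
def IsHPC (G Gbar : ADMG V) : Prop :=
  (∀ v w, G.dir v w → Gbar.dir v w) ∧
  (∀ v w, G.bi v w → Gbar.bi v w) ∧
  (∀ v w : V, v ≠ w → Gbar.dir v w ∨ Gbar.dir w v ∨ Gbar.bi v w) ∧
  (∀ H : Finset V, G.IsHead H → Gbar.IsHead H)

/-- Type of an edge on a path, read from left to right:
`u → w`, `u ← w`, or `u ↔ w`. -/
inductive EdgeType : Type
  | toRight
  | toLeft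
  | biE

/-- The edge of the given type is present in `G` between `u` (left) and `w` (right). -/
def edgeOK (G : ADMG V) : EdgeType → V → V → Prop
  | .toRight, u, w => G.dir u w
  | .toLeft,  u, w => G.dir w u
  | .biE,     u, w => G.bi u w

/-- The edge has an arrowhead at its right endpoint. -/
def arrowAtRight : EdgeType → Prop
  | .toRight => True
  | .toLeft  => False
  | .biE     => True

/-- The edge has an arrowhead at its left endpoint. -/
def arrowAtLeft : EdgeType → Prop
  | .toRight => False
  | .toLeft  => True
  | .biE     => True

/-- A path from `x` to `y` in the mixed graph `G`: distinct vertices `f 0, …, f n`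
joined by edges of the recorded types. -/
structure GPath (G : ADMG V) (x y : V) where
  n : ℕ
  f : Fin (n + 1) → V
  inj : Function.Injective f
  first : f 0 = x
  last : f (Fin.last n) = y
  e : Fin n → EdgeType
  ok : ∀ i : Fin n, edgeOK G (e i) (f i.castSucc) (f i.succ)

/-- The interior vertex `f (i+1)` is a collider on the path: both incident edges
have an arrowhead at it. -/
def GPath.colliderAt {G : ADMG V} {x y : V} (w : GPath G x y)
    (i : ℕ) (h : i + 1 < w.n) : Prop :=
  arrowAtRight (w.e ⟨i, by omega⟩) ∧ arrowAtLeft (w.e ⟨i + 1, h⟩)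

/-- The path is blocked by `C`: some interior non-collider is in `C`, or some interior
collider is outside `an_G(C)`. -/
def GPath.Blocked {G : ADMG V} {x y : V} (w : GPath G x y) (C : Finset V) : Prop :=
  ∃ (i : ℕ) (h : i + 1 < w.n),
    (¬ w.colliderAt i h ∧ w.f ⟨i + 1, by omega⟩ ∈ C) ∨
    (w.colliderAt i h ∧ w.f ⟨i + 1, by omega⟩ ∉ G.anc C)

/-- m-separation of `A` and `B` given `C` in `G`. -/
def MSep (G : ADMG V) (A B C : Finset V) : Prop :=
  ∀ a ∈ A, ∀ b ∈ B, ∀ w : GPath G a b, w.Blocked C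

namespace ADMG

variable (G : ADMG V)

theorem reflTransGen_dir_antisymm {a b : V} (hab : Relation.ReflTransGen G.dir a b)
    (hba : Relation.ReflTransGen G.dir b a) : a = b := by
  rcases Relation.reflTransGen_iff_eq_or_transGen.mp hab with h | h
  · exact h.symm
  · exact absurd (h.trans_right hba) (G.acyclic b)

theorem mem_anc {A : Finset V} {w : V} :
    w ∈ G.anc A ↔ ∃ a ∈ A, Relation.ReflTransGen G.dir w a := by
  simp [anc]

theorem mem_pa {A : Finset V} {w : V} : w ∈ G.pa A ↔ ∃ a ∈ A, G.dir w a := by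
  simp [pa]

theorem mem_dec_singleton {v w : V} : w ∈ G.dec {v} ↔ Relation.ReflTransGen G.dir v w := by
  simp [dec]

theorem mem_barren {U : Finset V} {v : V} :
    v ∈ G.barren U ↔ v ∈ U ∧ ∀ w ∈ U, Relation.ReflTransGen G.dir v w → w = v := by
  simp only [barren, mem_filter, Finset.ext_iff, mem_inter, mem_dec_singleton, mem_singleton]
  constructor
  · rintro ⟨hvU, hdesc⟩
    exact ⟨hvU, fun w hwU hvw => (hdesc w).mp ⟨hvw, hwU⟩⟩
  · rintro ⟨hvU, hdesc⟩
    refine ⟨hvU, fun w => ⟨fun ⟨hvw, hwU⟩ => hdesc w hwU hvw, ?_⟩⟩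
    rintro rfl
    exact ⟨.refl, hvU⟩

theorem subset_anc (A : Finset V) : A ⊆ G.anc A :=
  fun a ha => G.mem_anc.mpr ⟨a, ha, .refl⟩

theorem pa_subset_anc {A B : Finset V} (hAB : A ⊆ G.anc B) : G.pa A ⊆ G.anc B := by
  intro w hw
  obtain ⟨a, ha, hwa⟩ := G.mem_pa.mp hw
  obtain ⟨b, hb, hab⟩ := G.mem_anc.mp (hAB ha)
  exact G.mem_anc.mpr ⟨b, hb, .head hwa hab⟩

theorem disIn_subset (S A : Finset V) : G.disIn S A ⊆ S := by
  intro w hw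
  simp only [disIn, mem_filter, mem_univ, true_and] at hw
  obtain ⟨_, _, _, hwS, _⟩ := hw
  exact hwS

theorem tail_subset_anc (H : Finset V) : G.tail H ⊆ G.anc H :=
  union_subset (G.pa_subset_anc (G.disIn_subset _ _))
    (sdiff_subset.trans (G.disIn_subset _ _))

/-- Every vertex of `U` reaches some member of `H`; barrenness of `H` and acyclicity of `G`
then force any vertex of `U` below a member `v` of `H` to be `v` itself. -/
theorem barren_eq_of_subset_of_subset_anc {H U : Finset V} (hH : G.IsBarren H)
    (hHU : H ⊆ U) (hUH : U ⊆ G.anc H) : G.barren U = H := by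
  have hbarH : ∀ v ∈ H, ∀ w ∈ H, Relation.ReflTransGen G.dir v w → w = v := fun v hv =>
    (G.mem_barren.mp ((show G.barren H = H from hH).symm ▸ hv)).2
  ext v
  rw [mem_barren]
  constructor
  · rintro ⟨hvU, hdesc⟩
    obtain ⟨h, hh, hvh⟩ := G.mem_anc.mp (hUH hvU)
    exact hdesc h (hHU hh) hvh ▸ hh
  · intro hv
    refine ⟨hHU hv, fun w hwU hvw => ?_⟩
    obtain ⟨h, hh, hwh⟩ := G.mem_anc.mp (hUH hwU)
    have hhv : h = v := hbarH v hv h hh (hvw.trans hwh)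
    exact G.reflTransGen_dir_antisymm (hhv ▸ hwh) hvw

end ADMG

/-- for a head `H` with tail `T`, `H = barren_G(H ∪ T)`. -/
theorem head_eq_barren_head_union_tail (G : ADMG V) (H : Finset V)
    (hH : G.IsHead H) :
    H = G.barren (H ∪ G.tail H) :=
  (G.barren_eq_of_subset_of_subset_anc hH.2.1 subset_union_left
    (union_subset (G.subset_anc H) (G.tail_subset_anc H))).symm
end
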